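/- Let φ = (√5 - 1)/2, H(x) = -x·log x - (1-x)·log(1-x), and G(x) = φ·H(x²) - x·H(x). Then G'(φ) = 0, where G'(x) = 2xφ·log((1-x²)/x²) + 2x·log x + (1-2x)·log(1-x). -/

import Mathlib

open Real

lemma binEntropy_eq_neg_mul_log_sub_mul_log (x : ℝ) :
    binEntropy x = -x * log x - (1 - x) * log (1 - x) := by
  simp only [binEntropy, log_inv]
  ring

lemma hasDerivAt_mul_binEntropy_sq_sub_mul_binEntropy (c : ℝ) {x : ℝ} (hx₀ : 0 < x)
    (hx₁ : x < 1) :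
    HasDerivAt (fun x => c * binEntropy (x ^ 2) - x * binEntropy x)
      (2 * x * c * log ((1 - x ^ 2) / x ^ 2) + 2 * x * log x + (1 - 2 * x) * log (1 - x)) x := by
  have hsq₁ : x ^ 2 < 1 := by nlinarith
  have hH_sq := hasDerivAt_binEntropy (pow_pos hx₀ 2).ne' hsq₁.ne
  have hH := hasDerivAt_binEntropy hx₀.ne' hx₁.ne
  have hpow : HasDerivAt (fun x : ℝ => x ^ 2) (2 * x) x := by simpa using hasDerivAt_pow 2 x
  have hG : HasDerivAt (fun x => c * binEntropy (x ^ 2) - x * binEntropy x)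
      (c * ((log (1 - x ^ 2) - log (x ^ 2)) * (2 * x))
        - (1 * binEntropy x + x * (log (1 - x) - log x))) x :=
    ((hH_sq.comp (h := fun y : ℝ => y ^ 2) x hpow).const_mul c).sub ((hasDerivAt_id' x).mul hH)
  convert hG using 1
  rw [log_div (by linarith) (pow_pos hx₀ 2).ne', binEntropy_eq_neg_mul_log_sub_mul_log]
  ring

-- When `x ^ 2 = 1 - x`: `log (1 - x) = 2 log x` and `log ((1 - x ^ 2) / x ^ 2) = -log x`.
lemma log_combination_eq_zero_of_sq_eq_one_sub {x : ℝ} (hx : 0 < x) (h : x ^ 2 = 1 - x) :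
    2 * x * x * log ((1 - x ^ 2) / x ^ 2) + 2 * x * log x + (1 - 2 * x) * log (1 - x) = 0 := by
  have hdiv : (1 - x ^ 2) / x ^ 2 = x⁻¹ := by
    rw [show 1 - x ^ 2 = x by linarith]
    field_simp
  rw [hdiv, ← h, log_inv, log_pow]
  push_cast
  linear_combination (-2 * log x) * h

theorem stmt2
    (φ : ℝ) (hφ : φ = (Real.sqrt 5 - 1) / 2)
    (H : ℝ → ℝ) (hH : ∀ x, H x = -x * Real.log x - (1 - x) * Real.log (1 - x))
    (G : ℝ → ℝ) (hG : ∀ x, G x = φ * H (x ^ 2) - x * H x) :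
    HasDerivAt G
      (2 * φ * φ * Real.log ((1 - φ ^ 2) / φ ^ 2) + 2 * φ * Real.log φ
        + (1 - 2 * φ) * Real.log (1 - φ) ) φ ∧
    2 * φ * φ * Real.log ((1 - φ ^ 2) / φ ^ 2) + 2 * φ * Real.log φ
        + (1 - 2 * φ) * Real.log (1 - φ) = 0 := by
  have hφψ : φ = -goldenConj := by rw [hφ, goldenConj]; ring
  have hφ₀ : 0 < φ := by linarith [goldenConj_neg]
  have hφ₁ : φ < 1 := by linarith [neg_one_lt_goldenConj]
  have hφ_sq : φ ^ 2 = 1 - φ := by rw [hφψ, neg_sq, goldenConj_sq]; ring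
  have hH_eq : H = binEntropy :=
    funext fun x => (hH x).trans (binEntropy_eq_neg_mul_log_sub_mul_log x).symm
  have hG_eq : G = fun x => φ * binEntropy (x ^ 2) - x * binEntropy x := by
    funext x
    rw [hG, hH_eq]
  subst hG_eq
  exact ⟨hasDerivAt_mul_binEntropy_sq_sub_mul_binEntropy φ hφ₀ hφ₁,
    log_combination_eq_zero_of_sq_eq_one_sub hφ₀ hφ_sq⟩
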